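/- arXiv:1808.01221 — 2 statements merged into one kernel-verified Lean document; each statement's English description precedes it below -/
import Mathlib

section
/- Let $0 < |q| < 1$, $\tau \in \mathbb{C}^n$ with $0 < |\tau_1| < \cdots < |\tau_n| < 1$, and let $\lambda$ be a partition of length $\le n$ with all $\lambda_i > 0$. Then the symmetric interpolation Laurent polynomial satisfies $R_\lambda(x;q,\tau) = R_{\lambda - \mathbf{1}}(x;q,q\tau) \prod_{i=1}^n \dfrac{(x_i - \tau_n)(x_i^{-1} - \tau_n)}{(\overline{\lambda}_i - \tau_n)(\overline{\lambda}_i^{-1} - \tau_n)}$, where $\mathbf{1} = (1,\ldots,1)$, $\overline{\lambda}_i = q^{\lambda_i}\tau_i$, and $q\tau = (q\tau_1,\ldots,q\tau_n)$. -/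
noncomputable section

/-- The weight `|α| = |α₁| + ⋯ + |αₙ|`. -/
def wtZ {n : ℕ} (α : Fin n → ℤ) : ℕ := ∑ i, (α i).natAbs

/-- `l ∈ ℤⁿ` is a partition: weakly decreasing and nonnegative. -/
def IsPartition {n : ℕ} (l : Fin n → ℤ) : Prop :=
  (∀ i j : Fin n, i ≤ j → l j ≤ l i) ∧ ∀ i, 0 ≤ l i

/-- The action of `σπ ∈ Wₙ = {±1}ⁿ ⋊ Sₙ` on `ℤⁿ`. -/
def actZ {n : ℕ} (ε : Fin n → Bool) (π : Equiv.Perm (Fin n)) (α : Fin n → ℤ) : Fin n → ℤ :=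
  fun j => (if ε j then -1 else 1) * α (π.symm j)

/-- `Wₙ`-invariance at the level of coefficients. -/
def WInv {n : ℕ} (c : (Fin n → ℤ) →₀ ℂ) : Prop :=
  ∀ (ε : Fin n → Bool) (π : Equiv.Perm (Fin n)) (α : Fin n → ℤ), c (actZ ε π α) = c α

/-- Evaluation of the Laurent polynomial `∑_α c_α x^α`. -/
def evalL {n : ℕ} (c : (Fin n → ℤ) →₀ ℂ) (x : Fin n → ℂ) : ℂ :=
  c.sum fun α a => a * ∏ i, x i ^ α i

/-- The chain condition `0 < |τ₁| < ⋯ < |τₙ| < 1`. -/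
def TauChain {n : ℕ} (τ : Fin n → ℂ) : Prop :=
  (∀ i, 0 < ‖τ i‖) ∧ StrictMono (fun i => ‖τ i‖) ∧
    ∀ i, ‖τ i‖ < 1

/-!
Both sides are `Wₙ`-invariant Laurent polynomials of degree `≤ |λ|`, since
`∏ᵢ (xᵢ - τₙ)(xᵢ⁻¹ - τₙ)` has degree `n` and `|λ - 𝟏| = |λ| - n`. Their difference vanishes at
every `μ̄ = q^μ τ` with `|μ| ≤ |λ|`: if `μₙ = 0`, then `μ̄ₙ = τₙ` kills the product and
`R_λ(μ̄) = 0`; otherwise `q^μ τ = q^{μ-𝟏} (qτ)` and both sides equal `δ_{λμ}`.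

It remains to show uniqueness of interpolation: a `Wₙ`-invariant `f` of degree `≤ d` vanishing at
all `μ̄` with `|μ| ≤ d` is zero. By induction on `n`, `f(x₁, …, xₙ₋₁, τₙ) = 0`, so by symmetry `f`
vanishes on every hyperplane `xᵢ = τₙ^{±1}` and is divisible by `∏ᵢ (xᵢ - τₙ)(xᵢ⁻¹ - τₙ)`. The
quotient has degree `≤ d - n` and vanishes at the points `q^ν (qτ) = q^{ν+𝟏} τ` with
`|ν| ≤ d - n`, where the product does not vanish because `|q^{νᵢ+1} τᵢ| < |τₙ| < 1`; so it is zero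
by induction on `d`.
-/

theorem Units.sub_dvd_zpow_sub_zpow {R : Type*} [CommRing R] (u v : Rˣ) (k : ℤ) :
    (u - v : R) ∣ ((u ^ k : Rˣ) : R) - ((v ^ k : Rˣ) : R) := by
  rcases k with n | n
  · simpa using sub_dvd_pow_sub_pow (u : R) v n
  · set U := u ^ (n + 1)
    set V := v ^ (n + 1)
    have h : ((U⁻¹ : Rˣ) : R) - ((V⁻¹ : Rˣ) : R) = ↑U⁻¹ * ↑V⁻¹ * ((V : R) - U) := by
      linear_combination (↑V⁻¹ : R) * U.inv_mul - (↑U⁻¹ : R) * V.inv_mul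
    rw [zpow_negSucc, zpow_negSucc, h, Units.val_pow_eq_pow_val, Units.val_pow_eq_pow_val]
    exact Dvd.dvd.mul_left (dvd_sub_comm.mp (sub_dvd_pow_sub_pow _ _ _)) _

open AddMonoidAlgebra

namespace SymInterp

abbrev Laurent (N : ℕ) : Type := AddMonoidAlgebra ℂ (Fin N → ℤ)

variable {N : ℕ}

def X (i : Fin N) : Laurent N := single (Pi.single i 1) 1

def Xinv (i : Fin N) : Laurent N := single (-Pi.single i 1) 1

lemma algebraMap_eq_single (a : ℂ) : algebraMap ℂ (Laurent N) a = single 0 a := rfl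

lemma X_mul_Xinv (i : Fin N) : X i * Xinv i = 1 := by
  simp [X, Xinv, single_mul_single, one_def]

lemma prod_zpow_add {x : Fin N → ℂ} (hx : ∀ i, x i ≠ 0) (α β : Fin N → ℤ) :
    ∏ i, x i ^ (α + β) i = (∏ i, x i ^ α i) * ∏ i, x i ^ β i := by
  simp only [Pi.add_apply, zpow_add₀ (hx _), Finset.prod_mul_distrib]

def eval (x : Fin N → ℂ) (hx : ∀ i, x i ≠ 0) : Laurent N →ₐ[ℂ] ℂ :=
  lift ℂ ℂ (Fin N → ℤ)
    { toFun := fun α => ∏ i, x i ^ α.toAdd i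
      map_one' := by simp
      map_mul' := fun α β => prod_zpow_add hx α.toAdd β.toAdd }

lemma eval_apply {x : Fin N → ℂ} (hx : ∀ i, x i ≠ 0) (c : Laurent N) :
    eval x hx c = evalL c.coeff x := by
  simp [eval, lift_apply, evalL]

lemma eval_single {x : Fin N → ℂ} (hx : ∀ i, x i ≠ 0) (α : Fin N → ℤ) (a : ℂ) :
    eval x hx (single α a) = a * ∏ i, x i ^ α i := by
  simp [eval]

lemma eval_X {x : Fin N → ℂ} (hx : ∀ i, x i ≠ 0) (i : Fin N) : eval x hx (X i) = x i := by
  rw [X, eval_single, one_mul, Finset.prod_eq_single i (fun j _ hj => by simp [hj]) (by simp)]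
  simp

lemma eval_Xinv {x : Fin N → ℂ} (hx : ∀ i, x i ≠ 0) (i : Fin N) :
    eval x hx (Xinv i) = (x i)⁻¹ := by
  rw [Xinv, eval_single, one_mul, Finset.prod_eq_single i (fun j _ hj => by simp [hj]) (by simp)]
  simp

def subst (i : Fin N) {a : ℂ} (ha : a ≠ 0) : Laurent N →ₐ[ℂ] Laurent N :=
  lift ℂ (Laurent N) (Fin N → ℤ)
    { toFun := fun α => single (Function.update α.toAdd i 0) (a ^ α.toAdd i)
      map_one' := by simp [one_def]
      map_mul' := fun α β => by
        simp only [toAdd_mul, single_mul_single, Pi.add_apply, zpow_add₀ ha]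
        congr 1
        ext j
        by_cases hj : j = i
        · subst hj; simp
        · simp [Function.update_of_ne hj] }

lemma subst_single (i : Fin N) {a : ℂ} (ha : a ≠ 0) (α : Fin N → ℤ) (b : ℂ) :
    subst i ha (single α b) = single (Function.update α i 0) (b * a ^ α i) := by
  simp [subst]

lemma subst_single_of_eq_zero {i : Fin N} {a : ℂ} (ha : a ≠ 0) {α : Fin N → ℤ} (hα : α i = 0)
    (b : ℂ) : subst i ha (single α b) = single α b := by
  rw [subst_single, hα, zpow_zero, mul_one, ← hα, Function.update_eq_self]

lemma subst_X (i : Fin N) {a : ℂ} (ha : a ≠ 0) : subst i ha (X i) = algebraMap ℂ _ a := by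
  have h : Function.update (Pi.single i 1 : Fin N → ℤ) i 0 = 0 := by
    ext j; by_cases hj : j = i <;> simp [hj]
  rw [X, subst_single, h]
  simp

lemma X_sub_C_dvd_sub_subst (i : Fin N) {a : ℂ} (ha : a ≠ 0) (c : Laurent N) :
    X i - algebraMap ℂ _ a ∣ c - subst i ha c := by
  induction c using induction_linear with
  | zero => simp
  | add c d hc hd => simpa [add_sub_add_comm] using dvd_add hc hd
  | single α b =>
    set u := (of ℂ (Fin N → ℤ)).toHomUnits (.ofAdd (Pi.single i 1))
    set v := Units.map (algebraMap ℂ (Laurent N)).toMonoidHom (Units.mk0 a ha)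
    have hu : ((u ^ α i : (Laurent N)ˣ) : Laurent N) = single (α i • Pi.single i 1) 1 := by
      rw [← map_zpow, ← ofAdd_zsmul]; rfl
    have hv : ((v ^ α i : (Laurent N)ˣ) : Laurent N) = algebraMap ℂ _ (a ^ α i) := by
      rw [← map_zpow, Units.coe_map, Units.val_zpow_eq_zpow_val, Units.val_mk0]; rfl
    have hsplit : Function.update α i 0 + α i • Pi.single i 1 = α := by
      ext j; by_cases hj : j = i <;> simp [hj]
    have key : single α b - subst i ha (single α b)
        = single (Function.update α i 0) b * (((u ^ α i : (Laurent N)ˣ) : Laurent N)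
          - ((v ^ α i : (Laurent N)ˣ) : Laurent N)) := by
      rw [hu, hv, subst_single, mul_sub, single_mul_single, hsplit, algebraMap_eq_single,
        single_mul_single, add_zero, mul_one, mul_comm b]
    rw [key]
    exact Dvd.dvd.mul_left (Units.sub_dvd_zpow_sub_zpow u v (α i)) _

lemma X_sub_C_dvd_of_subst_eq_zero (i : Fin N) {a : ℂ} (ha : a ≠ 0) {c : Laurent N}
    (hc : subst i ha c = 0) : X i - algebraMap ℂ _ a ∣ c := by
  simpa [hc] using X_sub_C_dvd_sub_subst i ha c

def actEquiv (ε : Fin N → Bool) (π : Equiv.Perm (Fin N)) : (Fin N → ℤ) ≃+ (Fin N → ℤ) where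
  toFun := actZ ε π
  invFun := actZ (ε ∘ π) π.symm
  left_inv α := by
    ext j
    by_cases h : ε (π j) <;> simp [actZ, h]
  right_inv α := by
    ext j
    by_cases h : ε j <;> simp [actZ, h]
  map_add' α β := by
    ext j
    simp only [actZ, Pi.add_apply]
    ring

def wAct (ε : Fin N → Bool) (π : Equiv.Perm (Fin N)) : Laurent N ≃ₐ[ℂ] Laurent N :=
  domCongr ℂ ℂ (actEquiv ε π)

lemma wAct_single (ε : Fin N → Bool) (π : Equiv.Perm (Fin N)) (α : Fin N → ℤ) (a : ℂ) :
    wAct ε π (single α a) = single (actZ ε π α) a :=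
  domCongr_single (R := ℂ) (A := ℂ) _ α a

lemma wInv_iff_forall_wAct (c : Laurent N) :
    WInv c.coeff ↔ ∀ ε π, wAct ε π c = c := by
  refine forall₂_congr fun ε π => ⟨fun h => ?_, fun h α => ?_⟩
  · ext β
    rw [wAct, coeff_domCongr]
    have := h ((actEquiv ε π).symm β)
    rwa [show actZ ε π ((actEquiv ε π).symm β) = β from (actEquiv ε π).apply_symm_apply β,
      eq_comm] at this
  · conv_lhs => rw [← h]
    rw [wAct, coeff_domCongr]
    exact congrArg c.coeff ((actEquiv ε π).symm_apply_apply α)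

lemma actZ_single (ε : Fin N → Bool) (π : Equiv.Perm (Fin N)) (i : Fin N) :
    actZ ε π (Pi.single i 1) = if ε (π i) then -Pi.single (π i) 1 else Pi.single (π i) 1 := by
  ext j
  by_cases hj : j = π i
  · subst hj
    by_cases h : ε (π i) <;> simp [actZ, h]
  · have hj' : π.symm j ≠ i := fun h => hj (by rw [← h, Equiv.apply_symm_apply])
    by_cases h : ε (π i) <;> simp [actZ, h, hj, hj']

/-- `(xᵢ - t)(xᵢ⁻¹ - t)` (see `quadFactor_eq_mul`), written out because its degree `1` is not
visible from the factored form. -/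
def quadFactor (i : Fin N) (t : ℂ) : Laurent N :=
  single (Pi.single i 1) (-t) + single (-Pi.single i 1) (-t) + single 0 (1 + t ^ 2)

lemma quadFactor_eq_mul (i : Fin N) (t : ℂ) :
    quadFactor i t = (X i - algebraMap ℂ _ t) * (Xinv i - algebraMap ℂ _ t) := by
  simp only [X, Xinv, algebraMap_eq_single, quadFactor, sub_mul, mul_sub, single_mul_single,
    add_neg_cancel, add_zero, zero_add, one_mul, mul_one]
  rw [single_add, ← one_def, pow_two, single_neg, single_neg]
  abel

lemma eval_quadFactor {x : Fin N → ℂ} (hx : ∀ i, x i ≠ 0) (i : Fin N) (t : ℂ) :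
    eval x hx (quadFactor i t) = (x i - t) * ((x i)⁻¹ - t) := by
  simp only [quadFactor_eq_mul, map_mul, map_sub, eval_X, eval_Xinv, AlgHom.commutes]
  rfl

lemma wAct_quadFactor (ε : Fin N → Bool) (π : Equiv.Perm (Fin N)) (i : Fin N) (t : ℂ) :
    wAct ε π (quadFactor i t) = quadFactor (π i) t := by
  have h0 : actZ ε π 0 = 0 := map_zero (actEquiv ε π)
  have hneg : actZ ε π (-Pi.single i 1) = -actZ ε π (Pi.single i 1) :=
    map_neg (actEquiv ε π) _
  simp only [quadFactor, map_add, wAct_single, hneg, h0, actZ_single]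
  by_cases h : ε (π i) <;> simp only [h, if_true, if_false, Bool.false_eq_true, neg_neg]
  abel

lemma quadFactor_ne_zero (i : Fin N) {t : ℂ} (ht : t ≠ 0) : quadFactor i t ≠ 0 := by
  intro h
  have hcoeff := congrArg (fun c : Laurent N => c.coeff (Pi.single i 1)) h
  have h1 : (-Pi.single i 1 : Fin N → ℤ) ≠ Pi.single i 1 := fun h' => by
    simpa using congrFun h' i
  simp [quadFactor, h1, ht] at hcoeff

lemma subst_quadFactor_of_ne {i j : Fin N} (hij : j ≠ i) {a : ℂ} (ha : a ≠ 0) (t : ℂ) :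
    subst j ha (quadFactor i t) = quadFactor i t := by
  simp only [quadFactor, map_add]
  rw [subst_single_of_eq_zero ha (by simp [hij]), subst_single_of_eq_zero ha (by simp [hij]),
    subst_single_of_eq_zero ha rfl]

def quadProd (t : ℂ) : Laurent N := ∏ i, quadFactor i t

lemma wAct_quadProd (ε : Fin N → Bool) (π : Equiv.Perm (Fin N)) (t : ℂ) :
    wAct ε π (quadProd t : Laurent N) = quadProd t := by
  simp only [quadProd, map_prod, wAct_quadFactor]
  exact Equiv.prod_comp π fun i => quadFactor i t

lemma quadProd_ne_zero {t : ℂ} (ht : t ≠ 0) : (quadProd t : Laurent N) ≠ 0 :=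
  Finset.prod_ne_zero_iff.mpr fun i _ => quadFactor_ne_zero i ht

lemma eval_quadProd {x : Fin N → ℂ} (hx : ∀ i, x i ≠ 0) (t : ℂ) :
    eval x hx (quadProd t) = ∏ i, (x i - t) * ((x i)⁻¹ - t) := by
  simp [quadProd, eval_quadFactor]

lemma quadFactor_dvd_of_subst_eq_zero (i : Fin N) {t : ℂ} (ht : t ≠ 0) (ht2 : t ^ 2 ≠ 1)
    {c : Laurent N} (h₁ : subst i ht c = 0) (h₂ : subst i (inv_ne_zero ht) c = 0) :
    quadFactor i t ∣ c := by
  obtain ⟨g, rfl⟩ := X_sub_C_dvd_of_subst_eq_zero i ht h₁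
  have hC : algebraMap ℂ (Laurent N) (t⁻¹ - t) ≠ 0 := by
    rw [algebraMap_eq_single, Ne, single_eq_zero, sub_eq_zero]
    intro h
    apply ht2
    rw [pow_two]
    nth_rewrite 1 [← h]
    exact inv_mul_cancel₀ ht
  rw [map_mul, map_sub, subst_X, AlgHom.commutes, ← map_sub, mul_eq_zero] at h₂
  obtain ⟨h, rfl⟩ := X_sub_C_dvd_of_subst_eq_zero i (inv_ne_zero ht) (h₂.resolve_left hC)
  have hXX := X_mul_Xinv i
  have htt : algebraMap ℂ (Laurent N) t * algebraMap ℂ (Laurent N) t⁻¹ = 1 := by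
    rw [← map_mul, mul_inv_cancel₀ ht, map_one]
  refine ⟨-algebraMap ℂ _ t⁻¹ * X i * h, ?_⟩
  rw [quadFactor_eq_mul]
  linear_combination (X i - algebraMap ℂ _ t) * h * algebraMap ℂ _ t⁻¹ * hXX
    - (X i - algebraMap ℂ _ t) * h * X i * htt

def DegLE (c : Laurent N) (D : ℕ) : Prop := ∀ α ∈ c.coeff.support, wtZ α ≤ D

lemma DegLE.mono {c : Laurent N} {D E : ℕ} (hc : DegLE c D) (hDE : D ≤ E) : DegLE c E :=
  fun α hα => (hc α hα).trans hDE

lemma degLE_single {α : Fin N → ℤ} (a : ℂ) {D : ℕ} (h : wtZ α ≤ D) :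
    DegLE (single α a : Laurent N) D := fun β hβ => by
  rw [coeff_single] at hβ
  rwa [Finset.mem_singleton.mp (Finsupp.support_single_subset hβ)]

lemma DegLE.add {c d : Laurent N} {D : ℕ} (hc : DegLE c D) (hd : DegLE d D) :
    DegLE (c + d) D := fun β hβ => by
  rw [coeff_add] at hβ
  exact (Finset.mem_union.mp (Finsupp.support_add hβ)).elim (hc β) (hd β)

lemma DegLE.sub {c d : Laurent N} {D : ℕ} (hc : DegLE c D) (hd : DegLE d D) :
    DegLE (c - d) D := fun β hβ => by
  rw [coeff_sub] at hβ
  exact (Finset.mem_union.mp (Finsupp.support_sub hβ)).elim (hc β) (hd β)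

lemma DegLE.finsetSum {ι : Type*} {s : Finset ι} {f : ι → Laurent N} {D : ℕ}
    (hf : ∀ i ∈ s, DegLE (f i) D) : DegLE (∑ i ∈ s, f i) D := by
  induction s using Finset.cons_induction with
  | empty => simp [DegLE]
  | cons a s ha ih =>
    rw [Finset.sum_cons]
    exact (hf a (Finset.mem_cons_self a s)).add (ih fun i hi => hf i (Finset.mem_cons_of_mem hi))

lemma wtZ_add_le (α β : Fin N → ℤ) : wtZ (α + β) ≤ wtZ α + wtZ β := by
  unfold wtZ
  rw [← Finset.sum_add_distrib]
  exact Finset.sum_le_sum fun i _ => Int.natAbs_add_le _ _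

lemma DegLE.mul {c d : Laurent N} {D E : ℕ} (hc : DegLE c D) (hd : DegLE d E) :
    DegLE (c * d) (D + E) := by
  classical
  intro α hα
  obtain ⟨a, ha, b, hb, rfl⟩ := Finset.mem_add.mp (support_coeff_mul_subset c d hα)
  exact (wtZ_add_le a b).trans (Nat.add_le_add (hc a ha) (hd b hb))

lemma wtZ_add_single (α : Fin N → ℤ) (i : Fin N) (k : ℤ) :
    wtZ (α + Pi.single i k) + (α i).natAbs = wtZ α + (α i + k).natAbs := by
  unfold wtZ
  rw [← Finset.add_sum_erase _ _ (Finset.mem_univ i),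
    ← Finset.add_sum_erase _ _ (Finset.mem_univ i),
    Finset.sum_congr rfl fun j hj => by
      rw [Pi.add_apply, Pi.single_eq_of_ne (Finset.ne_of_mem_erase hj), add_zero]]
  simp only [Pi.add_apply, Pi.single_eq_same]
  ring

lemma wtZ_zero : wtZ (0 : Fin N → ℤ) = 0 := by simp [wtZ]

lemma wtZ_single (i : Fin N) (k : ℤ) : wtZ (Pi.single i k) = k.natAbs := by
  simpa [wtZ_zero] using wtZ_add_single 0 i k

lemma degLE_quadFactor (i : Fin N) (t : ℂ) : DegLE (quadFactor i t) 1 := by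
  refine ((degLE_single _ ?_).add (degLE_single _ ?_)).add (degLE_single _ ?_)
  · rw [wtZ_single]; rfl
  · rw [← Pi.single_neg, wtZ_single]; rfl
  · rw [wtZ_zero]; omega

lemma degLE_quadProd (t : ℂ) : DegLE (quadProd t : Laurent N) N := by
  suffices ∀ s : Finset (Fin N), DegLE (∏ i ∈ s, quadFactor i t) s.card by
    simpa [quadProd] using this Finset.univ
  intro s
  induction s using Finset.cons_induction with
  | empty => exact degLE_single 1 (by simp [wtZ])
  | cons a s ha ih =>
    rw [Finset.prod_cons, Finset.card_cons, add_comm]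
    exact (degLE_quadFactor a t).mul ih

lemma coeff_quadFactor_mul (i : Fin N) (t : ℂ) (h : Laurent N) (β : Fin N → ℤ) {s : ℤ}
    (hs : s = 1 ∨ s = -1) :
    (quadFactor i t * h).coeff β = -t * h.coeff (β - Pi.single i s)
      + -t * h.coeff (β + Pi.single i s) + (1 + t ^ 2) * h.coeff β := by
  have h₀ : (quadFactor i t * h).coeff β = -t * h.coeff (-Pi.single i 1 + β)
      + -t * h.coeff (Pi.single i 1 + β) + (1 + t ^ 2) * h.coeff β := by
    simp only [quadFactor, add_mul, coeff_add, Finsupp.add_apply, coeff_single_mul_apply, neg_neg,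
      neg_zero, zero_add]
  rcases hs with rfl | rfl
  · rw [h₀, sub_eq_neg_add, add_comm β]
  · rw [h₀, Pi.single_neg, sub_neg_eq_add, add_comm β, ← sub_eq_add_neg, sub_eq_neg_add]
    ring

/-- Dividing by `quadFactor i t` lowers the total degree by one: the monomial of `h` of maximal
weight, pushed one step away from `0` in the `i`-th exponent, survives in the product. -/
lemma add_one_le_of_degLE_quadFactor_mul {i : Fin N} {t : ℂ} (ht : t ≠ 0) {h : Laurent N}
    {D : ℕ} (hc : DegLE (quadFactor i t * h) D) : ∀ α ∈ h.coeff.support, wtZ α + 1 ≤ D := by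
  intro α₀ hα₀
  obtain ⟨α, hα, hmax⟩ := Finset.exists_max_image h.coeff.support wtZ ⟨α₀, hα₀⟩
  have hzero : ∀ γ, wtZ α < wtZ γ → h.coeff γ = 0 := fun γ hγ =>
    Finsupp.notMem_support_iff.mp fun hmem => (hmax γ hmem).not_gt hγ
  set s : ℤ := if 0 ≤ α i then 1 else -1
  have hs : s = 1 ∨ s = -1 := by unfold s; split_ifs <;> simp
  have hw₁ := wtZ_add_single α i s
  have hw₂ := wtZ_add_single α i (s + s)
  have habs : (α i + s).natAbs = (α i).natAbs + 1 ∧ (α i + (s + s)).natAbs = (α i).natAbs + 2 := by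
    unfold s; split_ifs <;> omega
  have hcoeff : (quadFactor i t * h).coeff (α + Pi.single i s) = -t * h.coeff α := by
    have h₁ : h.coeff (α + Pi.single i s) = 0 := hzero _ (by omega)
    have h₂ : h.coeff (α + Pi.single i (s + s)) = 0 := hzero _ (by omega)
    rw [coeff_quadFactor_mul i t h _ hs, add_sub_cancel_right, add_assoc α, ← Pi.single_add]
    simp only [h₁, h₂]
    ring
  have hmem : α + Pi.single i s ∈ (quadFactor i t * h).coeff.support := by
    rw [Finsupp.mem_support_iff, hcoeff]
    exact mul_ne_zero (neg_ne_zero.mpr ht) (Finsupp.mem_support_iff.mp hα)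
  have := hc _ hmem
  have := hmax α₀ hα₀
  omega

lemma exists_eq_quadProd_mul {t : ℂ} (ht : t ≠ 0) (ht2 : t ^ 2 ≠ 1) {c : Laurent N}
    (hsub : ∀ i, subst i ht c = 0) (hsub' : ∀ i, subst i (inv_ne_zero ht) c = 0) {d : ℕ}
    (hdeg : DegLE c d) : ∃ h, c = quadProd t * h ∧ ∀ α ∈ h.coeff.support, wtZ α + N ≤ d := by
  suffices ∀ s : Finset (Fin N), ∃ h, c = (∏ i ∈ s, quadFactor i t) * h ∧
      (∀ j ∉ s, subst j ht h = 0 ∧ subst j (inv_ne_zero ht) h = 0) ∧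
      ∀ α ∈ h.coeff.support, wtZ α + s.card ≤ d by
    obtain ⟨h, hc, -, hdegh⟩ := this Finset.univ
    exact ⟨h, hc, by simpa using hdegh⟩
  intro s
  induction s using Finset.cons_induction with
  | empty => exact ⟨c, by simp, fun j _ => ⟨hsub j, hsub' j⟩, fun α hα => hdeg α hα⟩
  | cons a s ha ih =>
    obtain ⟨h, rfl, hsubs, hdegh⟩ := ih
    obtain ⟨g, rfl⟩ := quadFactor_dvd_of_subst_eq_zero a ht ht2 (hsubs a ha).1 (hsubs a ha).2
    refine ⟨g, by rw [Finset.prod_cons, mul_assoc, mul_left_comm], fun j hj => ?_, fun α hα => ?_⟩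
    · rw [Finset.mem_cons, not_or] at hj
      obtain ⟨h₁, h₂⟩ := hsubs j hj.2
      rw [map_mul, subst_quadFactor_of_ne hj.1, mul_eq_zero] at h₁ h₂
      exact ⟨h₁.resolve_left (quadFactor_ne_zero a ht), h₂.resolve_left (quadFactor_ne_zero a ht)⟩
    · have := add_one_le_of_degLE_quadFactor_mul ht (D := d - s.card)
        (fun β hβ => by have := hdegh β hβ; omega) α hα
      rw [Finset.card_cons]
      omega

lemma actZ_update (ε : Fin N → Bool) (π : Equiv.Perm (Fin N)) (α : Fin N → ℤ) (i : Fin N) :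
    actZ ε π (Function.update α i 0) = Function.update (actZ ε π α) (π i) 0 := by
  ext j
  by_cases hj : j = π i
  · subst hj; simp [actZ]
  · have hj' : π.symm j ≠ i := fun h => hj (by rw [← h, Equiv.apply_symm_apply])
    simp [actZ, hj, hj']

lemma subst_wAct (ε : Fin N → Bool) (π : Equiv.Perm (Fin N)) (i : Fin N) {a b : ℂ}
    (ha : a ≠ 0) (hb : b ≠ 0) (hab : b = if ε (π i) then a⁻¹ else a) (c : Laurent N) :
    subst (π i) ha (wAct ε π c) = wAct ε π (subst i hb c) := by
  induction c using induction_linear with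
  | zero => simp
  | add c d hc hd => simp only [map_add, hc, hd]
  | single α v =>
    rw [wAct_single, subst_single, subst_single, wAct_single, actZ_update]
    congr 2
    simp only [actZ, Equiv.symm_apply_apply, hab]
    split_ifs <;> simp [zpow_neg]

lemma subst_eq_zero_of_wInv {c : Laurent N} (hW : WInv c.coeff) {t : ℂ} (ht : t ≠ 0) {j : Fin N}
    (hj : subst j ht c = 0) (i : Fin N) :
    subst i ht c = 0 ∧ subst i (inv_ne_zero ht) c = 0 := by
  rw [wInv_iff_forall_wAct] at hW
  have hperm := subst_wAct (fun _ => false) (Equiv.swap j i) j ht ht (by simp) c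
  rw [Equiv.swap_apply_left, hW, hj, map_zero] at hperm
  refine ⟨hperm, ?_⟩
  have hflip := subst_wAct (fun k => decide (k = i)) (Equiv.refl _) i ht (inv_ne_zero ht)
    (by simp) c
  rw [Equiv.refl_apply, hW, hperm, eq_comm, map_eq_zero_iff _ (AlgEquiv.injective _)] at hflip
  exact hflip

def restrictLast {t : ℂ} (ht : t ≠ 0) : Laurent (N + 1) →ₐ[ℂ] Laurent N :=
  lift ℂ (Laurent N) (Fin (N + 1) → ℤ)
    { toFun := fun α => single (fun j => α.toAdd j.castSucc) (t ^ α.toAdd (Fin.last N))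
      map_one' := rfl
      map_mul' := fun α β => by
        simp only [toAdd_mul, single_mul_single, Pi.add_apply, zpow_add₀ ht]
        rfl }

lemma restrictLast_single {t : ℂ} (ht : t ≠ 0) (α : Fin (N + 1) → ℤ) (v : ℂ) :
    restrictLast ht (single α v) = single (fun j => α j.castSucc) (v * t ^ α (Fin.last N)) := by
  rw [restrictLast, lift_single]
  exact smul_single' ..

lemma eval_restrictLast {t : ℂ} (ht : t ≠ 0) {x : Fin N → ℂ} (hx : ∀ i, x i ≠ 0)
    (hxt : ∀ i, (Fin.snoc x t : Fin (N + 1) → ℂ) i ≠ 0) (c : Laurent (N + 1)) :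
    eval x hx (restrictLast ht c) = eval _ hxt c := by
  induction c using induction_linear with
  | zero => simp
  | add c d hc hd => simp only [map_add, hc, hd]
  | single α v =>
    rw [restrictLast_single, eval_single, eval_single, Fin.prod_univ_castSucc]
    simp only [Fin.snoc_castSucc, Fin.snoc_last]
    ring

lemma DegLE.restrictLast {t : ℂ} (ht : t ≠ 0) {c : Laurent (N + 1)} {D : ℕ} (hc : DegLE c D) :
    DegLE (restrictLast ht c) D := by
  rw [← sum_coeff_single c, map_finsuppSum]
  refine DegLE.finsetSum fun α hα => ?_
  dsimp only
  rw [restrictLast_single]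
  refine degLE_single _ (le_trans ?_ (hc α hα))
  unfold wtZ
  rw [Fin.sum_univ_castSucc]
  exact Nat.le_add_right _ _

lemma subst_last_eq_mapDomain_restrictLast {t : ℂ} (ht : t ≠ 0) (c : Laurent (N + 1)) :
    subst (Fin.last N) ht c
      = mapDomain (fun β : Fin N → ℤ => (Fin.snoc β 0 : Fin (N + 1) → ℤ)) (restrictLast ht c) := by
  induction c using induction_linear with
  | zero => simp [mapDomain_zero]
  | add c d hc hd => simp only [map_add, hc, hd, mapDomain_add]
  | single α v =>
    rw [subst_single, restrictLast_single, mapDomain_single]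
    congr 1
    ext j
    induction j using Fin.lastCases with
    | last => simp
    | cast j => simp [(Fin.castSucc_lt_last j).ne]

def extPerm (π : Equiv.Perm (Fin N)) : Equiv.Perm (Fin (N + 1)) :=
  (finSuccEquivLast.trans π.optionCongr).trans finSuccEquivLast.symm

lemma extPerm_symm_castSucc (π : Equiv.Perm (Fin N)) (j : Fin N) :
    (extPerm π).symm j.castSucc = (π.symm j).castSucc := by
  rw [Equiv.symm_apply_eq]
  simp [extPerm]

lemma extPerm_symm_last (π : Equiv.Perm (Fin N)) : (extPerm π).symm (Fin.last N) = Fin.last N := by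
  rw [Equiv.symm_apply_eq]
  simp [extPerm]

lemma restrictLast_wAct {t : ℂ} (ht : t ≠ 0) (ε : Fin N → Bool) (π : Equiv.Perm (Fin N))
    (c : Laurent (N + 1)) :
    restrictLast ht (wAct (Fin.snoc ε false) (extPerm π) c) = wAct ε π (restrictLast ht c) := by
  induction c using induction_linear with
  | zero => simp
  | add c d hc hd => simp only [map_add, hc, hd]
  | single α v =>
    rw [wAct_single, restrictLast_single, restrictLast_single, wAct_single]
    congr 2
    · ext j
      simp [actZ, extPerm_symm_castSucc]
    · simp [actZ, extPerm_symm_last]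

lemma _root_.WInv.restrictLast {t : ℂ} (ht : t ≠ 0) {c : Laurent (N + 1)} (hW : WInv c.coeff) :
    WInv (restrictLast ht c).coeff := by
  rw [wInv_iff_forall_wAct] at hW ⊢
  intro ε π
  rw [← restrictLast_wAct, hW]

lemma _root_.IsPartition.snoc_zero {μ : Fin N → ℤ} (hμ : IsPartition μ) :
    IsPartition (Fin.snoc μ 0 : Fin (N + 1) → ℤ) := by
  have hnonneg : ∀ i, 0 ≤ (Fin.snoc μ 0 : Fin (N + 1) → ℤ) i := fun i => by
    induction i using Fin.lastCases with
    | last => simp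
    | cast i => simpa using hμ.2 i
  refine ⟨fun i j hij => ?_, hnonneg⟩
  induction j using Fin.lastCases with
  | last => simpa using hnonneg i
  | cast j =>
    induction i using Fin.lastCases with
    | last => exact absurd hij (Fin.castSucc_lt_last j).not_ge
    | cast i => simpa using hμ.1 i j (Fin.castSucc_le_castSucc_iff.mp hij)

lemma wtZ_snoc_zero (μ : Fin N → ℤ) : wtZ (Fin.snoc μ 0 : Fin (N + 1) → ℤ) = wtZ μ := by
  simp [wtZ, Fin.sum_univ_castSucc]

lemma _root_.IsPartition.add_one {μ : Fin N → ℤ} (hμ : IsPartition μ) :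
    IsPartition (fun i => μ i + 1) :=
  ⟨fun i j hij => by simpa using hμ.1 i j hij, fun i => by have := hμ.2 i; dsimp only; omega⟩

lemma _root_.IsPartition.sub_one {μ : Fin N → ℤ} (hμ : IsPartition μ) (hpos : ∀ i, 0 < μ i) :
    IsPartition (fun i => μ i - 1) :=
  ⟨fun i j hij => by simpa using hμ.1 i j hij, fun i => by have := hpos i; dsimp only; omega⟩

lemma wtZ_add_one {μ : Fin N → ℤ} (hμ : ∀ i, 0 ≤ μ i) :
    wtZ (fun i => μ i + 1) = wtZ μ + N := by
  unfold wtZ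
  rw [Finset.sum_congr rfl fun i _ => show (μ i + 1).natAbs = (μ i).natAbs + 1 by
    have := hμ i; omega]
  simp [Finset.sum_add_distrib]

lemma wtZ_sub_one {μ : Fin N → ℤ} (hμ : ∀ i, 0 < μ i) : wtZ (fun i => μ i - 1) + N = wtZ μ := by
  have h := wtZ_add_one (μ := fun i => μ i - 1) fun i => by have := hμ i; omega
  simp only [sub_add_cancel] at h
  exact h.symm

lemma _root_.TauChain.ne_zero {τ : Fin N → ℂ} (hτ : TauChain τ) (i : Fin N) : τ i ≠ 0 :=
  norm_pos_iff.mp (hτ.1 i)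

lemma _root_.TauChain.norm_le_last {τ : Fin (N + 1) → ℂ} (hτ : TauChain τ) (i : Fin (N + 1)) :
    ‖τ i‖ ≤ ‖τ (Fin.last N)‖ :=
  hτ.2.1.monotone (Fin.le_last i)

lemma _root_.TauChain.init {τ : Fin (N + 1) → ℂ} (hτ : TauChain τ) :
    TauChain (fun j : Fin N => τ j.castSucc) :=
  ⟨fun _ => hτ.1 _, hτ.2.1.comp Fin.strictMono_castSucc, fun _ => hτ.2.2 _⟩

lemma _root_.TauChain.mul_left {q : ℂ} (hq0 : 0 < ‖q‖) (hq1 : ‖q‖ < 1) {τ : Fin N → ℂ}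
    (hτ : TauChain τ) : TauChain (fun i => q * τ i) := by
  refine ⟨fun i => ?_, fun i j hij => ?_, fun i => ?_⟩
  · rw [norm_mul]; exact mul_pos hq0 (hτ.1 i)
  · simpa only [norm_mul] using mul_lt_mul_of_pos_left (hτ.2.1 hij) hq0
  · rw [norm_mul]; nlinarith [hτ.1 i, hτ.2.2 i]

lemma zpow_mul_ne_zero {q : ℂ} (hq : q ≠ 0) {τ : Fin N → ℂ} (hτ : TauChain τ) (μ : Fin N → ℤ)
    (i : Fin N) : q ^ μ i * τ i ≠ 0 :=
  mul_ne_zero (zpow_ne_zero _ hq) (hτ.ne_zero i)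

lemma zpow_mul_mul_left {q : ℂ} (hq : q ≠ 0) (ν : Fin N → ℤ) (τ : Fin N → ℂ) :
    (fun i => q ^ ν i * (q * τ i)) = fun i => q ^ (ν i + 1) * τ i := by
  ext i
  rw [zpow_add_one₀ hq]
  ring

lemma mul_inv_sub_ne_zero {y t : ℂ} (hy : y ≠ 0) (hyt : ‖y‖ < ‖t‖) (ht : ‖t‖ < 1) :
    (y - t) * (y⁻¹ - t) ≠ 0 := by
  refine mul_ne_zero (fun h => hyt.ne (by rw [sub_eq_zero.mp h])) fun h => ?_
  have h1 : ‖y‖ * ‖t‖ = 1 := by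
    rw [← norm_mul, ← sub_eq_zero.mp h, mul_inv_cancel₀ hy, norm_one]
  nlinarith [norm_nonneg y, norm_nonneg t]

lemma prod_quad_ne_zero {q : ℂ} (hq0 : 0 < ‖q‖) (hq1 : ‖q‖ < 1) {τ : Fin (N + 1) → ℂ}
    (hτ : TauChain τ) {μ : Fin (N + 1) → ℤ} (hμ : ∀ i, 0 < μ i) :
    ∏ i, (q ^ μ i * τ i - τ (Fin.last N)) * ((q ^ μ i * τ i)⁻¹ - τ (Fin.last N)) ≠ 0 := by
  refine Finset.prod_ne_zero_iff.mpr fun i _ => mul_inv_sub_ne_zero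
    (zpow_mul_ne_zero (norm_pos_iff.mp hq0) hτ μ i) ?_ (hτ.2.2 _)
  have hqμ : ‖q ^ μ i‖ < 1 := by
    rw [norm_zpow]
    exact zpow_lt_one₀ hq0 hq1 (hμ i)
  rw [norm_mul]
  nlinarith [hτ.1 i, hτ.norm_le_last i]

def VanishesOnPartitions (q : ℂ) (τ : Fin N → ℂ) (d : ℕ) (c : Laurent N) : Prop :=
  ∀ μ, IsPartition μ → wtZ μ ≤ d → evalL c.coeff (fun i => q ^ μ i * τ i) = 0

lemma VanishesOnPartitions.restrictLast {q : ℂ} (hq : q ≠ 0) {τ : Fin (N + 1) → ℂ}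
    (hτ : TauChain τ) {d : ℕ} {c : Laurent (N + 1)} (hc : VanishesOnPartitions q τ d c) :
    VanishesOnPartitions q (fun j => τ j.castSucc) d
      (SymInterp.restrictLast (hτ.ne_zero (Fin.last N)) c) := by
  intro μ hμ hwt
  have hpt : (Fin.snoc (fun j => q ^ μ j * τ j.castSucc) (τ (Fin.last N)) : Fin (N + 1) → ℂ)
      = fun i => q ^ (Fin.snoc μ 0 : Fin (N + 1) → ℤ) i * τ i := by
    ext i
    induction i using Fin.lastCases with
    | last => simp
    | cast i => simp
  have hx := zpow_mul_ne_zero hq hτ.init μ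
  have hxt : ∀ i, (Fin.snoc (fun j => q ^ μ j * τ j.castSucc) (τ (Fin.last N)) :
      Fin (N + 1) → ℂ) i ≠ 0 := by
    rw [hpt]
    exact zpow_mul_ne_zero hq hτ _
  rw [← eval_apply hx, eval_restrictLast _ hx hxt, eval_apply, hpt]
  exact hc _ hμ.snoc_zero (by rwa [wtZ_snoc_zero])

lemma VanishesOnPartitions.of_quadProd_mul {q : ℂ} (hq0 : 0 < ‖q‖) (hq1 : ‖q‖ < 1)
    {τ : Fin (N + 1) → ℂ} (hτ : TauChain τ) {d : ℕ} {h : Laurent (N + 1)}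
    (hc : VanishesOnPartitions q τ (d + (N + 1)) (quadProd (τ (Fin.last N)) * h)) :
    VanishesOnPartitions q (fun i => q * τ i) d h := by
  intro ν hν hwt
  have hq := norm_pos_iff.mp hq0
  have hx := zpow_mul_ne_zero hq hτ (fun i => ν i + 1)
  have hμ := hc _ hν.add_one (by rw [wtZ_add_one hν.2]; omega)
  rw [← eval_apply hx, map_mul, eval_quadProd, mul_eq_zero] at hμ
  rw [zpow_mul_mul_left hq, ← eval_apply hx]
  exact hμ.resolve_left (prod_quad_ne_zero hq0 hq1 hτ fun i => by have := hν.2 i; omega)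

lemma _root_.WInv.of_quadProd_mul {t : ℂ} (ht : t ≠ 0) {h : Laurent N}
    (hW : WInv (quadProd t * h).coeff) : WInv h.coeff := by
  rw [wInv_iff_forall_wAct] at hW ⊢
  intro ε π
  have := hW ε π
  rw [map_mul, wAct_quadProd] at this
  exact mul_left_cancel₀ (quadProd_ne_zero ht) this

lemma eq_zero_of_vanishesOnPartitions_zero {q : ℂ} {τ : Fin 0 → ℂ} {d : ℕ} {c : Laurent 0}
    (hc : VanishesOnPartitions q τ d c) : c = 0 := by
  have hc0 := hc 0 ⟨fun i => i.elim0, fun i => i.elim0⟩ (by simp [wtZ])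
  have hsingle : c = single 0 (c.coeff 0) := by
    refine coeff_injective (Finsupp.ext fun α => ?_)
    rw [Subsingleton.elim α 0, coeff_single, Finsupp.single_eq_same]
  rw [← eval_apply fun i => i.elim0, hsingle, eval_single] at hc0
  rw [hsingle, single_eq_zero]
  simpa using hc0

theorem eq_zero_of_vanishesOnPartitions {q : ℂ} (hq0 : 0 < ‖q‖) (hq1 : ‖q‖ < 1) :
    ∀ {N : ℕ} {τ : Fin N → ℂ}, TauChain τ → ∀ {d : ℕ} {c : Laurent N}, WInv c.coeff →
      DegLE c d → VanishesOnPartitions q τ d c → c = 0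
  | 0, _, _, _, _, _, _, hc => eq_zero_of_vanishesOnPartitions_zero hc
  | N + 1, τ, hτ, d, c, hW, hdeg, hc => by
    induction d using Nat.strong_induction_on generalizing τ c with
    | _ d ihd =>
    have ht := hτ.ne_zero (Fin.last N)
    have ht2 : τ (Fin.last N) ^ 2 ≠ 1 := fun h => by
      have := congrArg norm h
      rw [norm_pow, norm_one] at this
      nlinarith [hτ.2.2 (Fin.last N), norm_nonneg (τ (Fin.last N))]
    have hres : SymInterp.restrictLast ht c = 0 :=
      eq_zero_of_vanishesOnPartitions hq0 hq1 hτ.init (hW.restrictLast ht)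
        (hdeg.restrictLast ht) (hc.restrictLast (norm_pos_iff.mp hq0) hτ)
    have hsub := subst_eq_zero_of_wInv hW ht (j := Fin.last N)
      (by rw [subst_last_eq_mapDomain_restrictLast, hres, mapDomain_zero])
    obtain ⟨h, rfl, hdegh⟩ :=
      exists_eq_quadProd_mul ht ht2 (fun i => (hsub i).1) (fun i => (hsub i).2) hdeg
    suffices h = 0 by rw [this, mul_zero]
    rcases lt_or_ge d (N + 1) with hd | hd
    · refine coeff_injective (Finsupp.ext fun α => ?_)
      by_contra hα
      have := hdegh α (Finsupp.mem_support_iff.mpr hα)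
      omega
    · obtain ⟨e, rfl⟩ := Nat.exists_eq_add_of_le' hd
      exact ihd e (by omega) _ (hτ.mul_left hq0 hq1) _ (hW.of_quadProd_mul ht)
        (fun α hα => by have := hdegh α hα; omega) (hc.of_quadProd_mul hq0 hq1 hτ)

lemma vanishesOnPartitions_interpolation_defect {q : ℂ} (hq : q ≠ 0)
    {τ : Fin (N + 1) → ℂ} (hτ : TauChain τ) {l : Fin (N + 1) → ℤ} (hpos : ∀ i, 0 < l i)
    {r₁ r₂ : Laurent (N + 1)}
    (hr₁ : ∀ μ, IsPartition μ → wtZ μ ≤ wtZ l →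
      evalL r₁.coeff (fun i => q ^ μ i * τ i) = if μ = l then 1 else 0)
    (hr₂ : ∀ μ, IsPartition μ → wtZ μ ≤ wtZ (fun i => l i - 1) →
      evalL r₂.coeff (fun i => q ^ μ i * (q * τ i)) = if μ = (fun i => l i - 1) then 1 else 0) :
    VanishesOnPartitions q τ (wtZ l)
      (algebraMap ℂ _ (∏ i, (q ^ l i * τ i - τ (Fin.last N)) *
          ((q ^ l i * τ i)⁻¹ - τ (Fin.last N))) * r₁ - r₂ * quadProd (τ (Fin.last N))) := by
  intro μ hμ hwt
  have hx := zpow_mul_ne_zero hq hτ μ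
  rw [← eval_apply hx, map_sub, map_mul, map_mul, AlgHom.commutes, Algebra.algebraMap_self_apply,
    eval_quadProd, eval_apply, eval_apply, hr₁ μ hμ hwt]
  by_cases hμl : μ = l
  · subst hμl
    have h₂ := hr₂ _ (hμ.sub_one hpos) le_rfl
    rw [if_pos rfl, zpow_mul_mul_left hq] at h₂
    simp only [sub_add_cancel] at h₂
    rw [if_pos rfl, h₂]
    ring
  rw [if_neg hμl, mul_zero, zero_sub, neg_eq_zero, mul_eq_zero]
  by_cases hlast : μ (Fin.last N) = 0
  · exact .inr (Finset.prod_eq_zero (Finset.mem_univ (Fin.last N)) (by simp [hlast]))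
  have hμpos : ∀ i, 0 < μ i := fun i => by
    have := hμ.1 i (Fin.last N) (Fin.le_last i)
    have := hμ.2 (Fin.last N)
    omega
  have hwt' : wtZ (fun i => μ i - 1) ≤ wtZ (fun i => l i - 1) := by
    have := wtZ_sub_one hμpos
    have := wtZ_sub_one hpos
    omega
  have h₂ := hr₂ _ (hμ.sub_one hμpos) hwt'
  rw [zpow_mul_mul_left hq, if_neg fun h => hμl (funext fun i => by
    simpa using congrFun h i)] at h₂
  simp only [sub_add_cancel] at h₂
  exact .inl h₂

end SymInterp

open SymInterp

theorem stmt16_general {n : ℕ} (q : ℂ) (hq0 : 0 < ‖q‖) (hq1 : ‖q‖ < 1)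
    (τ : Fin (n + 1) → ℂ) (hτ : TauChain τ)
    (l : Fin (n + 1) → ℤ) (hpos : ∀ i, 0 < l i)
    (R1 : (Fin (n + 1) → ℤ) →₀ ℂ) (hR1W : WInv R1)
    (hR1deg : ∀ α ∈ R1.support, wtZ α ≤ wtZ l)
    (hR1int : ∀ μ : Fin (n + 1) → ℤ, IsPartition μ → wtZ μ ≤ wtZ l →
      evalL R1 (fun i => q ^ μ i * τ i) = if μ = l then 1 else 0)
    (R2 : (Fin (n + 1) → ℤ) →₀ ℂ) (hR2W : WInv R2)
    (hR2deg : ∀ α ∈ R2.support, wtZ α ≤ wtZ (fun i => l i - 1))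
    (hR2int : ∀ μ : Fin (n + 1) → ℤ, IsPartition μ → wtZ μ ≤ wtZ (fun i => l i - 1) →
      evalL R2 (fun i => q ^ μ i * (q * τ i)) = if μ = (fun i => l i - 1) then 1 else 0) :
    ∀ x : Fin (n + 1) → ℂ, (∀ i, x i ≠ 0) →
      evalL R1 x = evalL R2 x *
        ∏ i, ((x i - τ (Fin.last n)) * ((x i)⁻¹ - τ (Fin.last n)) /
          ((q ^ l i * τ i - τ (Fin.last n)) * ((q ^ l i * τ i)⁻¹ - τ (Fin.last n)))) := by
  intro x hx
  set t := τ (Fin.last n)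
  set κ := ∏ i, (q ^ l i * τ i - t) * ((q ^ l i * τ i)⁻¹ - t)
  have hκ : κ ≠ 0 := prod_quad_ne_zero hq0 hq1 hτ hpos
  set r₁ : Laurent (n + 1) := ofCoeff R1
  set r₂ : Laurent (n + 1) := ofCoeff R2
  have hdefect : algebraMap ℂ _ κ * r₁ - r₂ * quadProd t = 0 := by
    refine eq_zero_of_vanishesOnPartitions hq0 hq1 hτ ?_ ?_
      (vanishesOnPartitions_interpolation_defect (norm_pos_iff.mp hq0) hτ hpos hR1int hR2int)
    · rw [wInv_iff_forall_wAct] at hR1W hR2W ⊢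
      intro ε π
      rw [map_sub, map_mul, map_mul, AlgEquiv.commutes, hR1W, hR2W, wAct_quadProd]
    · refine (((degLE_single κ le_rfl).mul hR1deg).mono ?_).sub
        ((DegLE.mul (c := r₂) hR2deg (degLE_quadProd t)).mono (wtZ_sub_one hpos).le)
      rw [wtZ_zero, zero_add]
  have := congrArg (eval x hx) hdefect
  rw [map_sub, map_mul, map_mul, AlgHom.commutes, Algebra.algebraMap_self_apply, eval_quadProd,
    eval_apply, eval_apply, map_zero] at this
  rw [Finset.prod_div_distrib, ← mul_div_assoc, eq_div_iff hκ]
  linear_combination this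

/-- If `l` is a partition with all parts positive, then
`R_l(x;q,τ) = R_{l-𝟏}(x;q,qτ) ∏ᵢ (xᵢ-τₙ)(xᵢ⁻¹-τₙ)/((l̄ᵢ-τₙ)(l̄ᵢ⁻¹-τₙ))`,
where `R1` resp. `R2` satisfy the defining properties of `R_l(·;q,τ)` resp.
`R_{l-𝟏}(·;q,qτ)` and `l̄ᵢ = q^{lᵢ}τᵢ`. -/
theorem stmt16 {n : ℕ} (q : ℂ) (hq0 : 0 < ‖q‖) (hq1 : ‖q‖ < 1)
    (τ : Fin (n + 1) → ℂ) (hτ : TauChain τ)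
    (l : Fin (n + 1) → ℤ) (hl : IsPartition l) (hpos : ∀ i, 0 < l i)
    (R1 : (Fin (n + 1) → ℤ) →₀ ℂ) (hR1W : WInv R1)
    (hR1deg : ∀ α ∈ R1.support, wtZ α ≤ wtZ l)
    (hR1int : ∀ μ : Fin (n + 1) → ℤ, IsPartition μ → wtZ μ ≤ wtZ l →
      evalL R1 (fun i => q ^ μ i * τ i) = if μ = l then 1 else 0)
    (R2 : (Fin (n + 1) → ℤ) →₀ ℂ) (hR2W : WInv R2)
    (hR2deg : ∀ α ∈ R2.support, wtZ α ≤ wtZ (fun i => l i - 1))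
    (hR2int : ∀ μ : Fin (n + 1) → ℤ, IsPartition μ → wtZ μ ≤ wtZ (fun i => l i - 1) →
      evalL R2 (fun i => q ^ μ i * (q * τ i)) = if μ = (fun i => l i - 1) then 1 else 0) :
    ∀ x : Fin (n + 1) → ℂ, (∀ i, x i ≠ 0) →
      evalL R1 x = evalL R2 x *
        ∏ i, ((x i - τ (Fin.last n)) * ((x i)⁻¹ - τ (Fin.last n)) /
          ((q ^ l i * τ i - τ (Fin.last n)) * ((q ^ l i * τ i)⁻¹ - τ (Fin.last n)))) :=
  stmt16_general q hq0 hq1 τ hτ l hpos R1 hR1W hR1deg hR1int R2 hR2W hR2deg hR2int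
end
end

section
/- Let $0 < |q| < 1$, $0 < |s| < 1$. For $n \ge 1$, $\tau = (s,\ldots,s)$, and a partition $\lambda$ of length $\le n$, the symmetric interpolation Laurent polynomial is given by $R_\lambda(x;q,\mathbf{s}) = \sum_{\mu \in S_n\lambda} \prod_{i=1}^n R_{\mu_i}(x_i;q,s)$, where $R_m(y;q,s) = \frac{(sy, sy^{-1};q)_m}{(q^m s^2, q^{-m};q)_m}$ and the sum is over the distinct rearrangements $\mu$ of $\lambda$. -/
/-!
Both sides are `Wₙ`-invariant Laurent polynomials of degree `≤ |λ|` with the same values at the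
points `μ̄ = (q^{μᵢ} s)`, `|μ| ≤ |λ|`. For the right side, invariance under `xᵢ ↦ xᵢ⁻¹` comes from
`R_m(y) = R_m(y⁻¹)` (read off on Laurent coefficients), and the interpolation values from
`R_m(q^k s) = 0` for `k < m`, `R_m(q^m s) = 1`, together with the fact that a rearrangement of a
partition `λ` lying below a partition `ν` forces `λ ≤ ν`.

Such Laurent polynomials lie in the span of the orbit sums `m_μ`, `|μ| ≤ d`, a space of dimension
at most the number of these `μ`. The functions `R_μ = ∑_{κ ∈ Sₙ μ} ∏ᵢ R_{κᵢ}(xᵢ)` belong to this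
space and, ordered by weight, are unitriangular with respect to evaluation at the points `ν̄`; so
they form a basis, and an element of the space vanishing at every `ν̄` is zero.
-/

noncomputable section
open Finset

/-- The `q`-shifted factorial `(a;q)_k`. -/
def qPoch (q a : ℂ) (k : ℕ) : ℂ := ∏ i ∈ Finset.range k, (1 - q ^ i * a)

/-- The one-variable interpolation polynomial
`R_m(y) = (sy;q)_m (sy⁻¹;q)_m / ((q^m s²;q)_m (q^{-m};q)_m)`. -/
def Rone (q s : ℂ) (m : ℕ) (y : ℂ) : ℂ :=
  (qPoch q (s * y) m * qPoch q (s * y⁻¹) m) /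
    (qPoch q (q ^ m * s ^ 2) m * qPoch q (q ^ (-(m : ℤ))) m)

/-- The `Sₙ`-orbit of `l ∈ ℤⁿ` (the distinct rearrangements of `l`). -/
def orbitS {n : ℕ} (l : Fin n → ℤ) : Finset (Fin n → ℤ) :=
  Finset.image (fun π : Equiv.Perm (Fin n) => fun j => l (π.symm j)) Finset.univ

open Polynomial

section LaurentSums

variable {K : Type*} [Field K]

theorem sum_Icc_mul_zpow_eq_div (m : ℕ) (f : ℕ → K) {y : K} (hy : y ≠ 0) :
    ∑ j ∈ Icc (-(m : ℤ)) m, f (j + m).toNat * y ^ j =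
      (∑ k ∈ range (2 * m + 1), f k * y ^ k) / y ^ m := by
  rw [eq_div_iff (pow_ne_zero m hy), sum_mul]
  refine sum_nbij' (fun j => (j + m).toNat) (fun k => (k : ℤ) - m) ?_ ?_ ?_ ?_ ?_ <;>
    simp only [mem_Icc, mem_range]
  · intro j hj; omega
  · intro k hk; omega
  · intro j hj; omega
  · intro k _; omega
  · intro j hj
    rw [mul_assoc, ← zpow_natCast y m, ← zpow_add₀ hy, ← zpow_natCast y,
      Int.toNat_of_nonneg (by omega)]

theorem eq_zero_of_sum_mul_zpow_eq_zero [Infinite K] {m : ℕ} (a : ℤ → K)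
    (h : ∀ y : K, y ≠ 0 → ∑ j ∈ Icc (-(m : ℤ)) m, a j * y ^ j = 0) :
    ∀ j ∈ Icc (-(m : ℤ)) m, a j = 0 := by
  set Q : K[X] := ∑ k ∈ range (2 * m + 1), C (a (k - m)) * X ^ k
  have hQ : Q = 0 := by
    refine eq_zero_of_infinite_isRoot Q (Set.Infinite.mono (fun y (hy : y ≠ 0) => ?_)
      (Set.finite_singleton 0).infinite_compl)
    have hS : (∑ k ∈ range (2 * m + 1), a (k - m) * y ^ k) / y ^ m = 0 := by
      rw [← sum_Icc_mul_zpow_eq_div m (fun k => a (k - m)) hy, ← h y hy]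
      refine sum_congr rfl fun j hj => ?_
      rw [mem_Icc] at hj
      rw [Int.toNat_of_nonneg (by omega), add_sub_cancel_right]
    simpa [IsRoot, Q, eval_finsetSum, pow_ne_zero m hy] using hS
  intro j hj
  rw [mem_Icc] at hj
  have hcoeff := congrArg (coeff · (j + m).toNat) hQ
  simp only [Q, finsetSum_coeff, coeff_C_mul_X_pow, coeff_zero] at hcoeff
  rwa [sum_ite_eq_of_mem _ _ _ (mem_range.2 (by omega)), Int.toNat_of_nonneg (by omega),
    add_sub_cancel_right] at hcoeff

end LaurentSums

section OneVariable

variable {q s : ℂ}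

theorem qPoch_ne_zero {a : ℂ} (hq : ‖q‖ ≤ 1) (ha : ‖a‖ < 1) (k : ℕ) : qPoch q a k ≠ 0 := by
  refine prod_ne_zero_iff.2 fun i _ h => ?_
  have h1 : ‖q ^ i * a‖ < 1 :=
    calc ‖q ^ i * a‖ = ‖q‖ ^ i * ‖a‖ := by rw [norm_mul, norm_pow]
      _ ≤ ‖a‖ := mul_le_of_le_one_left (norm_nonneg a) (pow_le_one₀ (norm_nonneg q) hq)
      _ < 1 := ha
  rw [← sub_eq_zero.1 h, norm_one] at h1
  exact h1.false

theorem qPoch_zpow_neg_ne_zero (hq : q ≠ 0) (hq1 : ‖q‖ < 1) (m : ℕ) :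
    qPoch q (q ^ (-(m : ℤ))) m ≠ 0 := by
  refine prod_ne_zero_iff.2 fun i hi h => ?_
  have hqm : q ^ i = q ^ m := by
    rw [zpow_neg, zpow_natCast] at h
    field_simp at h
    linear_combination -h
  have := congrArg norm hqm
  rw [norm_pow, norm_pow] at this
  exact (pow_lt_pow_right_of_lt_one₀ (norm_pos_iff.2 hq) hq1 (mem_range.1 hi)).ne' this

theorem Rone_denom_ne_zero (hq : q ≠ 0) (hq1 : ‖q‖ < 1) (hs1 : ‖s‖ < 1) (m : ℕ) :
    qPoch q (q ^ m * s ^ 2) m * qPoch q (q ^ (-(m : ℤ))) m ≠ 0 := by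
  refine mul_ne_zero (qPoch_ne_zero hq1.le ?_ m) (qPoch_zpow_neg_ne_zero hq hq1 m)
  calc ‖q ^ m * s ^ 2‖ = ‖q‖ ^ m * ‖s‖ ^ 2 := by rw [norm_mul, norm_pow, norm_pow]
    _ ≤ ‖s‖ ^ 2 := mul_le_of_le_one_left (by positivity) (pow_le_one₀ (norm_nonneg q) hq1.le)
    _ < 1 := pow_lt_one₀ (norm_nonneg s) hs1 two_ne_zero

theorem Rone_zpow_mul_eq_zero (hq : q ≠ 0) (hs : s ≠ 0) {m : ℕ} {k : ℤ} (hk0 : 0 ≤ k)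
    (hk : k < m) : Rone q s m (q ^ k * s) = 0 := by
  lift k to ℕ using hk0
  refine div_eq_zero_iff.2 (Or.inl (mul_eq_zero_of_right _ ?_))
  refine prod_eq_zero (mem_range.2 (by exact_mod_cast hk)) ?_
  rw [zpow_natCast]
  field_simp
  ring

theorem Rone_zpow_mul_self (hq : q ≠ 0) (hq1 : ‖q‖ < 1) (hs : s ≠ 0) (hs1 : ‖s‖ < 1) (m : ℕ) :
    Rone q s m (q ^ (m : ℤ) * s) = 1 := by
  have h1 : s * (q ^ (m : ℤ) * s) = q ^ m * s ^ 2 := by rw [zpow_natCast]; ring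
  have h2 : s * (q ^ (m : ℤ) * s)⁻¹ = q ^ (-(m : ℤ)) := by
    rw [zpow_neg]; field_simp
  rw [Rone, h1, h2]
  exact div_self (Rone_denom_ne_zero hq hq1 hs1 m)

/-- `y ^ m (s y; q)_m (s y⁻¹; q)_m` as a polynomial in `y`. -/
def RoneNumerator (q s : ℂ) (m : ℕ) : ℂ[X] :=
  ∏ i ∈ range m, (1 - C (q ^ i * s) * X) * (X - C (q ^ i * s))

theorem natDegree_RoneNumerator_le (q s : ℂ) (m : ℕ) : (RoneNumerator q s m).natDegree ≤ 2 * m :=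
  calc (RoneNumerator q s m).natDegree ≤ ∑ _i ∈ range m, 2 := by
        refine (natDegree_prod_le _ _).trans (sum_le_sum fun i _ => ?_)
        compute_degree
    _ = 2 * m := by rw [sum_const, card_range, smul_eq_mul, mul_comm]

theorem eval_RoneNumerator (m : ℕ) {y : ℂ} (hy : y ≠ 0) :
    (RoneNumerator q s m).eval y = (qPoch q (s * y) m * qPoch q (s * y⁻¹) m) * y ^ m := by
  have hym : y ^ m = ∏ _i ∈ range m, y := by rw [prod_const, card_range]
  rw [RoneNumerator, eval_prod, qPoch, qPoch, hym, ← prod_mul_distrib, ← prod_mul_distrib]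
  refine prod_congr rfl fun i _ => ?_
  simp only [eval_mul, eval_sub, eval_one, eval_C, eval_X]
  field_simp

def RoneCoeff (q s : ℂ) (m : ℕ) (j : ℤ) : ℂ :=
  if -(m : ℤ) ≤ j ∧ j ≤ m then
    (RoneNumerator q s m).coeff (j + m).toNat /
      (qPoch q (q ^ m * s ^ 2) m * qPoch q (q ^ (-(m : ℤ))) m)
  else 0

theorem mem_Icc_of_RoneCoeff_ne_zero {m : ℕ} {j : ℤ} (h : RoneCoeff q s m j ≠ 0) :
    j ∈ Icc (-(m : ℤ)) m := by
  by_contra hj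
  exact h (if_neg (mt mem_Icc.2 hj))

theorem Rone_eq_sum_RoneCoeff (m : ℕ) {y : ℂ} (hy : y ≠ 0) :
    Rone q s m y = ∑ j ∈ Icc (-(m : ℤ)) m, RoneCoeff q s m j * y ^ j := by
  rw [Rone]
  set D := qPoch q (q ^ m * s ^ 2) m * qPoch q (q ^ (-(m : ℤ))) m
  have hcoeff : ∀ j ∈ Icc (-(m : ℤ)) m,
      RoneCoeff q s m j = (RoneNumerator q s m).coeff (j + m).toNat / D :=
    fun j hj => if_pos (mem_Icc.1 hj)
  rw [sum_congr rfl fun j hj => by rw [hcoeff j hj],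
    sum_Icc_mul_zpow_eq_div m (fun k => (RoneNumerator q s m).coeff k / D) hy]
  simp only [div_mul_eq_mul_div, ← sum_div]
  rw [← eval_eq_sum_range' (by linarith [natDegree_RoneNumerator_le q s m]),
    eval_RoneNumerator m hy]
  field_simp

theorem Rone_inv (m : ℕ) (y : ℂ) : Rone q s m y⁻¹ = Rone q s m y := by
  rw [Rone, Rone, inv_inv, mul_comm (qPoch q (s * y⁻¹) m)]

theorem RoneCoeff_neg (m : ℕ) (j : ℤ) : RoneCoeff q s m (-j) = RoneCoeff q s m j := by
  by_cases hj : -(m : ℤ) ≤ j ∧ j ≤ m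
  · refine sub_eq_zero.1 (eq_zero_of_sum_mul_zpow_eq_zero (m := m)
      (fun i => RoneCoeff q s m (-i) - RoneCoeff q s m i) (fun y hy => ?_) j (mem_Icc.2 hj))
    have hinv : ∑ i ∈ Icc (-(m : ℤ)) m, RoneCoeff q s m (-i) * y ^ i =
        ∑ i ∈ Icc (-(m : ℤ)) m, RoneCoeff q s m i * y⁻¹ ^ i := by
      refine sum_nbij' (fun i => -i) (fun i => -i) ?_ ?_ ?_ ?_ ?_ <;> simp only [mem_Icc]
      · intro i hi; omega
      · intro i hi; omega
      · intro i _; omega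
      · intro i _; omega
      · intro i _; rw [inv_zpow', neg_neg]
    simp only [sub_mul, sum_sub_distrib]
    rw [hinv, ← Rone_eq_sum_RoneCoeff m (inv_ne_zero hy), ← Rone_eq_sum_RoneCoeff m hy, Rone_inv,
      sub_self]
  · rw [RoneCoeff, if_neg (by omega), RoneCoeff, if_neg hj]

end OneVariable

section Combinatorics

variable {n : ℕ}

theorem natAbs_le_wtZ (α : Fin n → ℤ) (i : Fin n) : (α i).natAbs ≤ wtZ α :=
  single_le_sum (f := fun j => (α j).natAbs) (fun _ _ => Nat.zero_le _) (mem_univ i)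

theorem wtZ_actZ (ε : Fin n → Bool) (π : Equiv.Perm (Fin n)) (α : Fin n → ℤ) :
    wtZ (actZ ε π α) = wtZ α := by
  have h : ∀ j, (actZ ε π α j).natAbs = (α (π.symm j)).natAbs := fun j => by
    simp only [actZ]; split_ifs <;> simp
  simp only [wtZ, h]
  exact Equiv.sum_comp π.symm fun j => (α j).natAbs

/-- Sorting by `-|αᵢ|` makes the result weakly decreasing. -/
def sortAbs (α : Fin n → ℤ) : Fin n → ℤ :=
  fun j => |α (Tuple.sort (fun i => -|α i|) j)|

theorem isPartition_sortAbs (α : Fin n → ℤ) : IsPartition (sortAbs α) := by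
  refine ⟨fun i j hij => ?_, fun i => abs_nonneg _⟩
  have := Tuple.monotone_sort (fun i => -|α i|) hij
  simp only [Function.comp_apply] at this
  simp only [sortAbs]
  omega

theorem exists_actZ_eq_sortAbs (α : Fin n → ℤ) : ∃ ε π, actZ ε π α = sortAbs α := by
  set σ := Tuple.sort fun i => -|α i|
  refine ⟨fun j => decide (α (σ j) < 0), σ.symm, funext fun j => ?_⟩
  rcases lt_or_ge (α (σ j)) 0 with h | h
  · simp [actZ, sortAbs, σ, h, abs_of_neg h]
  · simp [actZ, sortAbs, σ, not_lt.2 h, abs_of_nonneg h]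

theorem wtZ_sortAbs (α : Fin n → ℤ) : wtZ (sortAbs α) = wtZ α := by
  obtain ⟨ε, π, h⟩ := exists_actZ_eq_sortAbs α
  rw [← h, wtZ_actZ]

theorem IsPartition.le_of_comp_perm_le {μ ν : Fin n → ℤ} (hμ : IsPartition μ)
    (hν : IsPartition ν) (σ : Equiv.Perm (Fin n)) (h : ∀ i, μ (σ i) ≤ ν i) (i : Fin n) :
    μ i ≤ ν i := by
  obtain ⟨j, hij, hji⟩ : ∃ j, i ≤ j ∧ σ j ≤ i := by
    by_contra! hc
    have hsub : (Ici i).image σ ⊆ Ioi i := fun k hk => by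
      obtain ⟨j, hj, rfl⟩ := mem_image.1 hk
      exact mem_Ioi.2 (hc j (mem_Ici.1 hj))
    have := card_le_card hsub
    rw [card_image_of_injective _ σ.injective, Fin.card_Ici, Fin.card_Ioi] at this
    omega
  calc μ i ≤ μ (σ j) := hμ.1 _ _ hji
    _ ≤ ν j := h j
    _ ≤ ν i := hν.1 _ _ hij

theorem eq_of_le_of_wtZ_le {μ ν : Fin n → ℤ} (hμ : ∀ i, 0 ≤ μ i) (hle : ∀ i, μ i ≤ ν i)
    (hwt : wtZ ν ≤ wtZ μ) : μ = ν := by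
  have habs : ∀ i ∈ univ, (μ i).natAbs ≤ (ν i).natAbs := fun i _ => by
    have := hle i; have := hμ i; omega
  have heq := (sum_eq_sum_iff_of_le habs).1 (le_antisymm (sum_le_sum habs) hwt)
  funext i
  have := heq i (mem_univ i); have := hle i; have := hμ i
  omega

theorem mem_orbitS {l κ : Fin n → ℤ} :
    κ ∈ orbitS l ↔ ∃ σ : Equiv.Perm (Fin n), κ = fun j => l (σ.symm j) := by
  simp only [orbitS, mem_image, mem_univ, true_and, eq_comm]

theorem mem_orbitS_self (l : Fin n → ℤ) : l ∈ orbitS l :=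
  mem_orbitS.2 ⟨1, rfl⟩

theorem comp_perm_mem_orbitS {l κ : Fin n → ℤ} (h : κ ∈ orbitS l) (π : Equiv.Perm (Fin n)) :
    (fun j => κ (π j)) ∈ orbitS l := by
  obtain ⟨σ, rfl⟩ := mem_orbitS.1 h
  exact mem_orbitS.2 ⟨(π.trans σ.symm).symm, by funext j; simp⟩

theorem nonneg_of_mem_orbitS {l κ : Fin n → ℤ} (hl : IsPartition l) (h : κ ∈ orbitS l)
    (i : Fin n) : 0 ≤ κ i := by
  obtain ⟨σ, rfl⟩ := mem_orbitS.1 h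
  exact hl.2 _

theorem wtZ_of_mem_orbitS {l κ : Fin n → ℤ} (h : κ ∈ orbitS l) : wtZ κ = wtZ l := by
  obtain ⟨σ, rfl⟩ := mem_orbitS.1 h
  exact Equiv.sum_comp σ.symm fun j => (l j).natAbs

end Combinatorics

section SymmetricInterpolation

variable {n : ℕ} {q s : ℂ}

def Rsym (q s : ℂ) (l : Fin n → ℤ) (x : Fin n → ℂ) : ℂ :=
  ∑ κ ∈ orbitS l, ∏ i, Rone q s (κ i).toNat (x i)

def RsymCoeff (q s : ℂ) (l α : Fin n → ℤ) : ℂ :=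
  ∑ κ ∈ orbitS l, ∏ i, RoneCoeff q s (κ i).toNat (α i)

def laurentBox (n d : ℕ) : Finset (Fin n → ℤ) :=
  Fintype.piFinset fun _ => Icc (-(d : ℤ)) d

theorem prod_Rone_eq_sum_laurentBox {d : ℕ} {κ : Fin n → ℤ} (hκ : ∀ i, 0 ≤ κ i ∧ κ i ≤ d)
    {x : Fin n → ℂ} (hx : ∀ i, x i ≠ 0) :
    ∏ i, Rone q s (κ i).toNat (x i) =
      ∑ α ∈ laurentBox n d, (∏ i, RoneCoeff q s (κ i).toNat (α i)) * ∏ i, x i ^ α i := by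
  have hone : ∀ i, Rone q s (κ i).toNat (x i) =
      ∑ j ∈ Icc (-(d : ℤ)) d, RoneCoeff q s (κ i).toNat j * x i ^ j := fun i => by
    rw [Rone_eq_sum_RoneCoeff _ (hx i)]
    refine sum_subset (fun j hj => ?_) fun j _ hj => ?_
    · simp only [mem_Icc] at hj ⊢; have := hκ i; omega
    · rw [RoneCoeff, if_neg, zero_mul]
      simp only [mem_Icc] at hj; omega
  simp only [hone, prod_univ_sum, laurentBox, prod_mul_distrib]

theorem Rsym_eq_sum_laurentBox {d : ℕ} {l : Fin n → ℤ} (hl : IsPartition l) (hld : wtZ l ≤ d)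
    {x : Fin n → ℂ} (hx : ∀ i, x i ≠ 0) :
    Rsym q s l x = ∑ α ∈ laurentBox n d, RsymCoeff q s l α * ∏ i, x i ^ α i := by
  have hκ : ∀ κ ∈ orbitS l, ∀ i, 0 ≤ κ i ∧ κ i ≤ d := fun κ hκ i => by
    have := natAbs_le_wtZ κ i
    have := wtZ_of_mem_orbitS hκ
    have := nonneg_of_mem_orbitS hl hκ i
    omega
  simp only [Rsym, RsymCoeff, sum_mul]
  rw [sum_congr rfl fun κ h => prod_Rone_eq_sum_laurentBox (hκ κ h) hx, sum_comm]

theorem RsymCoeff_actZ (l : Fin n → ℤ) (ε : Fin n → Bool) (π : Equiv.Perm (Fin n))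
    (α : Fin n → ℤ) : RsymCoeff q s l (actZ ε π α) = RsymCoeff q s l α := by
  have hterm : ∀ κ : Fin n → ℤ, ∏ i, RoneCoeff q s (κ i).toNat (actZ ε π α i) =
      ∏ i, RoneCoeff q s (κ (π i)).toNat (α i) := fun κ => by
    have h : ∀ j, RoneCoeff q s (κ j).toNat (actZ ε π α j) =
        RoneCoeff q s (κ j).toNat (α (π.symm j)) := fun j => by
      simp only [actZ]; split_ifs <;> simp [RoneCoeff_neg]
    rw [prod_congr rfl fun j _ => h j, ← Equiv.prod_comp π]
    simp
  simp only [RsymCoeff, hterm]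
  exact sum_nbij' (fun κ j => κ (π j)) (fun κ j => κ (π.symm j))
    (fun κ h => comp_perm_mem_orbitS h π) (fun κ h => comp_perm_mem_orbitS h π.symm)
    (fun κ _ => by simp) (fun κ _ => by simp) fun κ _ => rfl

theorem wtZ_le_of_RsymCoeff_ne_zero {l α : Fin n → ℤ} (hl : IsPartition l)
    (h : RsymCoeff q s l α ≠ 0) : wtZ α ≤ wtZ l := by
  obtain ⟨κ, hκ, hne⟩ := exists_ne_zero_of_sum_ne_zero h
  have hle : ∀ i ∈ univ, (α i).natAbs ≤ (κ i).natAbs := fun i _ => by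
    have := mem_Icc.1 <| mem_Icc_of_RoneCoeff_ne_zero (prod_ne_zero_iff.1 hne i (mem_univ i))
    have := nonneg_of_mem_orbitS hl hκ i
    omega
  exact (sum_le_sum hle).trans (wtZ_of_mem_orbitS hκ).le

theorem prod_Rone_interpPt_eq_zero (hq : q ≠ 0) (hs : s ≠ 0) {κ ν : Fin n → ℤ}
    (hν : ∀ i, 0 ≤ ν i) (h : ∃ i, ν i < κ i) :
    ∏ i, Rone q s (κ i).toNat (q ^ ν i * s) = 0 := by
  obtain ⟨i, hi⟩ := h
  exact prod_eq_zero (mem_univ i) (Rone_zpow_mul_eq_zero hq hs (hν i) (by omega))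

theorem Rsym_interpPt_self (hq : q ≠ 0) (hq1 : ‖q‖ < 1) (hs : s ≠ 0) (hs1 : ‖s‖ < 1)
    {ν : Fin n → ℤ} (hν : IsPartition ν) : Rsym q s ν (fun i => q ^ ν i * s) = 1 := by
  rw [Rsym, sum_eq_single_of_mem ν (mem_orbitS_self ν)]
  · refine prod_eq_one fun i _ => ?_
    have h := Rone_zpow_mul_self hq hq1 hs hs1 (ν i).toNat
    rwa [Int.toNat_of_nonneg (hν.2 i)] at h
  · refine fun κ hκ hne => prod_Rone_interpPt_eq_zero hq hs hν.2 ?_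
    by_contra! hle
    exact hne (eq_of_le_of_wtZ_le (nonneg_of_mem_orbitS hν hκ) hle
      (wtZ_of_mem_orbitS hκ).ge)

theorem Rsym_interpPt (hq : q ≠ 0) (hq1 : ‖q‖ < 1) (hs : s ≠ 0) (hs1 : ‖s‖ < 1)
    {l ν : Fin n → ℤ} (hl : IsPartition l) (hν : IsPartition ν) (hwt : wtZ ν ≤ wtZ l) :
    Rsym q s l (fun i => q ^ ν i * s) = if ν = l then 1 else 0 := by
  split_ifs with h
  · exact h ▸ Rsym_interpPt_self hq hq1 hs hs1 hν
  obtain ⟨i, hi⟩ : ∃ i, ν i < l i := by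
    by_contra! hle
    exact h (eq_of_le_of_wtZ_le hl.2 hle hwt).symm
  refine sum_eq_zero fun κ hκ => prod_Rone_interpPt_eq_zero hq hs hν.2 ?_
  by_contra! hle
  obtain ⟨σ, rfl⟩ := mem_orbitS.1 hκ
  exact (hl.le_of_comp_perm_le hν σ.symm hle i).not_gt hi

end SymmetricInterpolation

section OrbitSums

variable {n : ℕ}

def lowWeight (n d : ℕ) : Finset (Fin n → ℤ) :=
  (laurentBox n d).filter fun α => wtZ α ≤ d

open Classical in
def partitionsLE (n d : ℕ) : Finset (Fin n → ℤ) :=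
  (lowWeight n d).filter IsPartition

theorem mem_lowWeight {d : ℕ} {α : Fin n → ℤ} : α ∈ lowWeight n d ↔ wtZ α ≤ d := by
  simp only [lowWeight, laurentBox, mem_filter, Fintype.mem_piFinset, mem_Icc,
    and_iff_right_iff_imp]
  intro h i
  have := natAbs_le_wtZ α i
  omega

open Classical in
theorem mem_partitionsLE {d : ℕ} {μ : Fin n → ℤ} :
    μ ∈ partitionsLE n d ↔ IsPartition μ ∧ wtZ μ ≤ d := by
  rw [partitionsLE, mem_filter, mem_lowWeight, and_comm]

/-- The orbit sum `m_μ(x) = ∑_{α ∈ Wₙ μ} x^α`: for `wtZ μ ≤ d` the filter below is exactly the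
orbit `Wₙ μ`. -/
def orbitMonomial (d : ℕ) (μ : Fin n → ℤ) (x : Fin n → ℂ) : ℂ :=
  ∑ α ∈ (lowWeight n d).filter (sortAbs · = μ), ∏ i, x i ^ α i

theorem sum_laurentBox_eq_sum_partitionsLE {d : ℕ} (g : (Fin n → ℤ) → ℂ)
    (hg : ∀ ε π α, g (actZ ε π α) = g α) (hgd : ∀ α, d < wtZ α → g α = 0) (x : Fin n → ℂ) :
    ∑ α ∈ laurentBox n d, g α * ∏ i, x i ^ α i =
      ∑ μ ∈ partitionsLE n d, g μ * orbitMonomial d μ x := by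
  have hlow : ∑ α ∈ lowWeight n d, g α * ∏ i, x i ^ α i =
      ∑ α ∈ laurentBox n d, g α * ∏ i, x i ^ α i :=
    sum_subset (filter_subset _ _) fun α hα hlow => by
      rw [hgd α (not_le.1 fun h => hlow (mem_filter.2 ⟨hα, h⟩)), zero_mul]
  have hsort : ∀ α ∈ lowWeight n d, sortAbs α ∈ partitionsLE n d := fun α hα =>
    mem_partitionsLE.2 ⟨isPartition_sortAbs α, (wtZ_sortAbs α).trans_le (mem_lowWeight.1 hα)⟩
  rw [← hlow, ← sum_fiberwise_of_maps_to hsort]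
  refine sum_congr rfl fun μ _ => ?_
  rw [orbitMonomial, mul_sum]
  refine sum_congr rfl fun α hα => ?_
  obtain ⟨ε, π, h⟩ := exists_actZ_eq_sortAbs α
  rw [← (mem_filter.1 hα).2, ← h, hg]

theorem evalL_eq_sum_laurentBox {d : ℕ} (c : (Fin n → ℤ) →₀ ℂ)
    (hc : ∀ α ∈ c.support, wtZ α ≤ d) (x : Fin n → ℂ) :
    evalL c x = ∑ α ∈ laurentBox n d, c α * ∏ i, x i ^ α i :=
  Finsupp.sum_of_support_subset _ (fun α hα => filter_subset _ _ (mem_lowWeight.2 (hc α hα)))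
    _ fun _ _ => zero_mul _

abbrev Torus (n : ℕ) : Type := {x : Fin n → ℂ // ∀ i, x i ≠ 0}

def orbitSpan (n d : ℕ) : Submodule ℂ (Torus n → ℂ) :=
  Submodule.span ℂ
    (Set.range fun μ : partitionsLE n d => fun x : Torus n => orbitMonomial d μ.1 x.1)

theorem mem_orbitSpan_of_eq_sum {d : ℕ} (g : (Fin n → ℤ) → ℂ)
    (hg : ∀ ε π α, g (actZ ε π α) = g α) (hgd : ∀ α, d < wtZ α → g α = 0) {f : Torus n → ℂ}
    (hf : ∀ x : Torus n, f x = ∑ α ∈ laurentBox n d, g α * ∏ i, x.1 i ^ α i) :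
    f ∈ orbitSpan n d := by
  have hf' : f = ∑ μ : partitionsLE n d, g μ • fun x : Torus n => orbitMonomial d μ.1 x.1 := by
    funext x
    rw [hf, sum_laurentBox_eq_sum_partitionsLE g hg hgd, ← sum_coe_sort]
    simp
  rw [hf']
  exact Submodule.sum_mem _ fun μ _ => Submodule.smul_mem _ _ (Submodule.subset_span ⟨μ, rfl⟩)

theorem evalL_mem_orbitSpan {d : ℕ} {c : (Fin n → ℤ) →₀ ℂ} (hW : WInv c)
    (hc : ∀ α ∈ c.support, wtZ α ≤ d) : (fun x : Torus n => evalL c x.1) ∈ orbitSpan n d :=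
  mem_orbitSpan_of_eq_sum c hW
    (fun α hα => Finsupp.notMem_support_iff.1 fun h => (hc α h).not_gt hα)
    fun x => evalL_eq_sum_laurentBox c hc x.1

theorem Rsym_mem_orbitSpan {d : ℕ} (q s : ℂ) {μ : Fin n → ℤ} (hμ : μ ∈ partitionsLE n d) :
    (fun x : Torus n => Rsym q s μ x.1) ∈ orbitSpan n d := by
  obtain ⟨hμp, hμd⟩ := mem_partitionsLE.1 hμ
  exact mem_orbitSpan_of_eq_sum (RsymCoeff q s μ) (RsymCoeff_actZ μ)
    (fun α hα => by_contra fun h => (wtZ_le_of_RsymCoeff_ne_zero hμp h).not_gt (hμd.trans_lt hα))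
    fun x => Rsym_eq_sum_laurentBox hμp hμd x.2

end OrbitSums

section Unitriangular

variable {ι X K : Type*} [Fintype ι]

theorem eq_zero_of_unitriangular_eval [Semiring K] (f : ι → X → K) (p : ι → X) (w : ι → ℕ)
    (hdiag : ∀ μ, f μ (p μ) = 1) (hoff : ∀ μ ν, μ ≠ ν → w ν ≤ w μ → f μ (p ν) = 0)
    (c : ι → K) (hc : ∀ ν, ∑ μ, c μ * f μ (p ν) = 0) (ν : ι) : c ν = 0 := by
  induction h : w ν using Nat.strong_induction_on generalizing ν with
  | _ k ih =>
    have hν := hc ν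
    rwa [sum_eq_single ν (fun μ _ hμν => ?_) (by simp), hdiag, mul_one] at hν
    rcases le_or_gt (w ν) (w μ) with hle | hlt
    · rw [hoff μ ν hμν hle, mul_zero]
    · rw [ih (w μ) (h ▸ hlt) μ rfl, zero_mul]

/-- By the dimension bound, the unitriangular family `f` spans `V`. -/
theorem eq_zero_of_mem_of_unitriangular_eval [Field K] (V : Submodule K (X → K))
    [FiniteDimensional K V] (hV : Module.finrank K V ≤ Fintype.card ι) (f : ι → X → K)
    (hfV : ∀ μ, f μ ∈ V) (p : ι → X) (w : ι → ℕ) (hdiag : ∀ μ, f μ (p μ) = 1)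
    (hoff : ∀ μ ν, μ ≠ ν → w ν ≤ w μ → f μ (p ν) = 0) {g : X → K} (hg : g ∈ V)
    (hgp : ∀ ν, g (p ν) = 0) : g = 0 := by
  have hli : LinearIndependent K f := Fintype.linearIndependent_iff.2 fun c hc =>
    eq_zero_of_unitriangular_eval f p w hdiag hoff c fun ν => by
      simpa using congrFun hc (p ν)
  have hspan : Submodule.span K (Set.range f) = V :=
    Submodule.eq_of_le_of_finrank_le (Submodule.span_le.2 (Set.range_subset_iff.2 hfV))
      (by rwa [finrank_span_eq_card hli])
  obtain ⟨c, rfl⟩ := (Submodule.mem_span_range_iff_exists_fun K).1 (hspan ▸ hg)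
  have hc := eq_zero_of_unitriangular_eval f p w hdiag hoff c fun ν => by
    simpa using hgp ν
  simp [hc]

end Unitriangular

section Uniqueness

variable {n : ℕ} {q s : ℂ}

def interpPt (hq : q ≠ 0) (hs : s ≠ 0) (ν : Fin n → ℤ) : Torus n :=
  ⟨fun i => q ^ ν i * s, fun _ => mul_ne_zero (zpow_ne_zero _ hq) hs⟩

theorem eq_zero_of_mem_orbitSpan (hq : q ≠ 0) (hq1 : ‖q‖ < 1) (hs : s ≠ 0) (hs1 : ‖s‖ < 1)
    {d : ℕ} {g : Torus n → ℂ} (hg : g ∈ orbitSpan n d)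
    (hgp : ∀ ν ∈ partitionsLE n d, g (interpPt hq hs ν) = 0) : g = 0 := by
  have : FiniteDimensional ℂ (orbitSpan n d) :=
    FiniteDimensional.span_of_finite ℂ (Set.finite_range _)
  refine eq_zero_of_mem_of_unitriangular_eval (orbitSpan n d) (finrank_range_le_card _)
    (fun μ : partitionsLE n d => fun x : Torus n => Rsym q s μ.1 x.1)
    (fun μ => Rsym_mem_orbitSpan q s μ.2) (fun ν => interpPt hq hs ν.1) (fun ν => wtZ ν.1)
    (fun μ => Rsym_interpPt_self hq hq1 hs hs1 (mem_partitionsLE.1 μ.2).1) (fun μ ν hμν hwt => ?_)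
    hg fun ν => hgp ν.1 ν.2
  rw [interpPt, Rsym_interpPt hq hq1 hs hs1 (mem_partitionsLE.1 μ.2).1
    (mem_partitionsLE.1 ν.2).1 hwt, if_neg fun h => hμν (Subtype.ext h).symm]

end Uniqueness

/-- For `τ = (s,…,s)` the symmetric interpolation Laurent polynomial `R_l` is
`R_l(x;q,𝐬) = ∑_{μ ∈ Sₙ l} ∏ᵢ R_{μᵢ}(xᵢ;q,s)`. Here `Rc` is characterized by the
defining properties of `R_l(·;q,𝐬)` (invariance, degree `≤ |l|`, interpolation
at the points `μ̄ᵢ = q^{μᵢ} s`). -/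
theorem stmt17 {n : ℕ} (q s : ℂ) (hq0 : 0 < ‖q‖) (hq1 : ‖q‖ < 1)
    (hs0 : 0 < ‖s‖) (hs1 : ‖s‖ < 1)
    (l : Fin n → ℤ) (hl : IsPartition l)
    (Rc : (Fin n → ℤ) →₀ ℂ) (hW : WInv Rc)
    (hdeg : ∀ α ∈ Rc.support, wtZ α ≤ wtZ l)
    (hint : ∀ μ : Fin n → ℤ, IsPartition μ → wtZ μ ≤ wtZ l →
      evalL Rc (fun i => q ^ μ i * s) = if μ = l then 1 else 0) :
    ∀ x : Fin n → ℂ, (∀ i, x i ≠ 0) →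
      evalL Rc x = ∑ μ ∈ orbitS l, ∏ i, Rone q s (μ i).toNat (x i) := by
  have hq : q ≠ 0 := norm_pos_iff.1 hq0
  have hs : s ≠ 0 := norm_pos_iff.1 hs0
  intro x hx
  have hlP : l ∈ partitionsLE n (wtZ l) := mem_partitionsLE.2 ⟨hl, le_rfl⟩
  let g : Torus n → ℂ := fun y => evalL Rc y.1 - Rsym q s l y.1
  have hg : g ∈ orbitSpan n (wtZ l) :=
    sub_mem (evalL_mem_orbitSpan hW hdeg) (Rsym_mem_orbitSpan q s hlP)
  have hg0 : g = 0 := eq_zero_of_mem_orbitSpan hq hq1 hs hs1 hg fun ν hν => by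
    obtain ⟨hνp, hνd⟩ := mem_partitionsLE.1 hν
    simp only [g, interpPt, hint ν hνp hνd, Rsym_interpPt hq hq1 hs hs1 hl hνp hνd, sub_self]
  exact sub_eq_zero.1 (congrFun hg0 ⟨x, hx⟩)
end
end
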